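/- arXiv:0804.3194 — 3 statements merged into one kernel-verified Lean document; each statement's English description precedes it below -/
import Mathlib

section
/- Let $F/F_0$ be an unramified quadratic extension of non-archimedean local fields of odd residual characteristic with common uniformizer $\varpi$. Let $V$ be a 2-dimensional $F$-vector space with the anisotropic hermitian form $f_0(x,y) = \overline{x}_1 y_1 + \varpi \overline{x}_2 y_2$ (in a fixed basis $e_1, e_2$). Then the lattice $L = \mathfrak{o}_F e_1 \oplus \mathfrak{o}_F e_2$ is the unique $\mathfrak{o}_F$-lattice in $V$ satisfying $L^\# \supseteq L \supseteq \varpi L^\#$, where $L^\# = \{v \in V \mid f_0(v, L) \subseteq \mathfrak{o}_F\}$. -/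
/-!
Since `L ⊆ L^#`, each `v ∈ L` has `f₀(v, v) = N(v₁) + ϖ N(v₂) ∈ 𝔬_F`. The two summands have
valuations of different parity, so they cannot cancel and `v₁, v₂ ∈ 𝔬_F`: thus `L ⊆ 𝔬_F²`.
Then `f₀(ϖ⁻¹e₂, w) = w₂` shows `ϖ⁻¹e₂ ∈ L^#`, hence `e₂ ∈ ϖL^# ⊆ L`. If every `v ∈ L` had
`v₁ ∈ ϖ𝔬_F`, the same argument would give `e₁ ∈ L`, which is absurd; so some `v ∈ L` has a unit
first coordinate, and `e₁ = v₁⁻¹v - (v₂/v₁)e₂ ∈ L`.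
-/

section Valuation

variable {F Γ₀ : Type*} [Field F] [LinearOrderedCommGroupWithZero Γ₀] {v : Valuation F Γ₀} {ϖ : F}

theorem Valuation.inv_le_of_one_lt (hϖ : ∀ x, v x < 1 → v x ≤ v ϖ) {x : F} (hx : 1 < v x) :
    (v ϖ)⁻¹ ≤ v x := by
  have hinv : (v x)⁻¹ ≤ v ϖ := by
    simpa only [map_inv₀] using hϖ x⁻¹ (by simpa only [map_inv₀] using inv_lt_one_of_one_lt₀ hx)
  have hx0 : 0 < v x := zero_lt_one.trans hx
  exact (inv_le_comm₀ hx0 (lt_of_lt_of_le (inv_pos.2 hx0) hinv)).1 hinv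

theorem Valuation.sq_ne_mul_sq (hϖ0 : ϖ ≠ 0) (hϖ1 : v ϖ < 1) (hϖ : ∀ x, v x < 1 → v x ≤ v ϖ)
    (x : F) {y : F} (hy : y ≠ 0) : v x ^ 2 ≠ v ϖ * v y ^ 2 := by
  intro h
  have hz : v (x / y) ^ 2 = v ϖ := by
    rw [map_div₀, div_pow, h, mul_div_cancel_right₀ _ (pow_ne_zero 2 ((v.ne_zero_iff).2 hy))]
  have hz1 : v (x / y) < 1 := (pow_lt_one_iff two_ne_zero).1 (hz ▸ hϖ1)
  have hϖpos : 0 < v ϖ := zero_lt_iff.2 ((v.ne_zero_iff).2 hϖ0)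
  refine lt_irrefl (v ϖ) ?_
  calc v ϖ = v (x / y) ^ 2 := hz.symm
    _ ≤ v ϖ ^ 2 := pow_le_pow_left₀ zero_le (hϖ _ hz1) 2
    _ = v ϖ * v ϖ := sq _
    _ < v ϖ := mul_lt_of_lt_one_right hϖpos hϖ1

theorem Valuation.le_one_of_norm_add_mul_norm_le_one (hϖ0 : ϖ ≠ 0) (hϖ1 : v ϖ < 1)
    (hϖ : ∀ x, v x < 1 → v x ≤ v ϖ) (σ : F → F) (hσ : ∀ x, v (σ x) = v x) {x y : F}
    (h : v (σ x * x + ϖ * (σ y * y)) ≤ 1) : v x ≤ 1 ∧ v y ≤ 1 := by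
  have hx : v (σ x * x) = v x ^ 2 := by rw [map_mul, hσ, sq]
  have hy : v (ϖ * (σ y * y)) = v ϖ * v y ^ 2 := by rw [map_mul, map_mul, hσ, sq]
  rcases eq_or_ne y 0 with rfl | hy0
  · rw [mul_zero, mul_zero, add_zero, hx] at h
    exact ⟨(pow_le_one_iff two_ne_zero).1 h, by simp⟩
  rw [v.map_add_of_distinct_val (by rw [hx, hy]; exact v.sq_ne_mul_sq hϖ0 hϖ1 hϖ x hy0),
    max_le_iff, hx, hy] at h
  refine ⟨(pow_le_one_iff two_ne_zero).1 h.1, le_of_not_gt fun hy1 => h.2.not_gt ?_⟩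
  have hϖpos : 0 < v ϖ := zero_lt_iff.2 ((v.ne_zero_iff).2 hϖ0)
  calc (1 : Γ₀) < (v ϖ)⁻¹ := one_lt_inv_iff₀.2 ⟨hϖpos, hϖ1⟩
    _ = v ϖ * (v ϖ)⁻¹ ^ 2 := by rw [sq, ← mul_assoc, mul_inv_cancel₀ hϖpos.ne', one_mul]
    _ ≤ v ϖ * v y ^ 2 := by gcongr; exact v.inv_le_of_one_lt hϖ hy1

end Valuation

section Uniformizer

variable {F : Type*} [Field F] {ϖ : F}

theorem Subring.inv_mem_or_exists_eq_mul {O : Subring F} (hϖO : ϖ ∈ O)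
    (hunif : ∀ x : F, x ≠ 0 → ∃ (n : ℤ) (u : F), u ∈ O ∧ (∃ w ∈ O, u * w = 1) ∧ x = u * ϖ ^ n)
    {x : F} (hx0 : x ≠ 0) : x⁻¹ ∈ O ∨ ∃ t ∈ O, x = ϖ * t := by
  obtain ⟨n, u, hu, ⟨w, hw, huw⟩, rfl⟩ := hunif x hx0
  obtain ⟨k, rfl | rfl⟩ := Int.eq_nat_or_neg n
  · rcases k with _ | k
    · left
      rw [Int.natCast_zero, zpow_zero, mul_one, ← eq_inv_of_mul_eq_one_right huw]
      exact hw
    · right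
      refine ⟨u * ϖ ^ k, mul_mem hu (pow_mem hϖO k), ?_⟩
      rw [zpow_natCast, pow_succ]
      ring
  · left
    rw [zpow_neg, zpow_natCast, mul_inv, inv_inv, ← eq_inv_of_mul_eq_one_right huw]
    exact mul_mem hw (pow_mem hϖO k)

namespace ValuationSubring

variable (A : ValuationSubring F)

theorem valuation_eq_one_of_mul_eq_one {u w : F} (hu : u ∈ A) (hw : w ∈ A) (h : u * w = 1) :
    A.valuation u = 1 :=
  le_antisymm ((A.valuation_le_one_iff u).2 hu) <| calc
    1 = A.valuation u * A.valuation w := by rw [← map_mul, h, map_one]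
    _ ≤ A.valuation u := mul_le_of_le_one_right' ((A.valuation_le_one_iff w).2 hw)

variable {A}

theorem valuation_lt_one_of_forall_mul_ne_one (hϖA : ϖ ∈ A) (hϖnu : ∀ y ∈ A, ϖ * y ≠ 1) :
    A.valuation ϖ < 1 := by
  refine lt_of_le_of_ne ((A.valuation_le_one_iff ϖ).2 hϖA) fun h => ?_
  have hϖ0 : ϖ ≠ 0 := by rintro rfl; simp at h
  refine hϖnu ϖ⁻¹ ((A.valuation_le_one_iff _).1 ?_) (mul_inv_cancel₀ hϖ0)
  rw [map_inv₀, h, inv_one]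

theorem valuation_le_of_valuation_lt_one (hϖA : ϖ ∈ A)
    (hunif : ∀ x : F, x ≠ 0 → ∃ (n : ℤ) (u : F), u ∈ A ∧ (∃ w ∈ A, u * w = 1) ∧ x = u * ϖ ^ n)
    {x : F} (hx : A.valuation x < 1) : A.valuation x ≤ A.valuation ϖ := by
  rcases eq_or_ne x 0 with rfl | hx0
  · simp
  obtain hinv | ⟨t, ht, rfl⟩ := A.toSubring.inv_mem_or_exists_eq_mul hϖA hunif hx0
  · have hle := (A.valuation_le_one_iff x⁻¹).2 hinv
    rw [map_inv₀, inv_le_one₀ (zero_lt_iff.2 ((A.valuation.ne_zero_iff).2 hx0))] at hle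
    exact absurd hx hle.not_gt
  · rw [map_mul]
    exact mul_le_of_le_one_right' ((A.valuation_le_one_iff t).2 ht)

theorem valuation_map_eq (σ : F →+* F) (hσA : ∀ x ∈ A, σ x ∈ A) (hϖσ : σ ϖ = ϖ)
    (hunif : ∀ x : F, x ≠ 0 → ∃ (n : ℤ) (u : F), u ∈ A ∧ (∃ w ∈ A, u * w = 1) ∧ x = u * ϖ ^ n)
    (x : F) : A.valuation (σ x) = A.valuation x := by
  rcases eq_or_ne x 0 with rfl | hx0
  · simp
  obtain ⟨n, u, hu, ⟨w, hw, huw⟩, rfl⟩ := hunif x hx0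
  have hσu : A.valuation (σ u) = 1 :=
    A.valuation_eq_one_of_mul_eq_one (hσA u hu) (hσA w hw) (by rw [← map_mul, huw, map_one])
  rw [map_mul, map_zpow₀, hϖσ, map_mul, map_mul, hσu,
    A.valuation_eq_one_of_mul_eq_one hu hw huw]

end ValuationSubring

theorem Subring.mem_and_mem_of_norm_add_mem {O : Subring F} {σ : F →+* F}
    (hval : ∀ x : F, x ≠ 0 → x ∈ O ∨ x⁻¹ ∈ O) (hOσ : ∀ x ∈ O, σ x ∈ O)
    (hϖO : ϖ ∈ O) (hϖ0 : ϖ ≠ 0) (hϖnu : ∀ y ∈ O, ϖ * y ≠ 1) (hϖσ : σ ϖ = ϖ)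
    (hunif : ∀ x : F, x ≠ 0 → ∃ (n : ℤ) (u : F), u ∈ O ∧ (∃ w ∈ O, u * w = 1) ∧ x = u * ϖ ^ n)
    {x y : F} (h : σ x * x + ϖ * (σ y * y) ∈ O) : x ∈ O ∧ y ∈ O := by
  let A := ValuationSubring.ofSubring O fun x =>
    (eq_or_ne x 0).elim (fun hx => .inl (hx ▸ O.zero_mem)) (hval x)
  exact (A.valuation.le_one_of_norm_add_mul_norm_le_one hϖ0
    (A.valuation_lt_one_of_forall_mul_ne_one hϖO hϖnu)
    (fun _ => A.valuation_le_of_valuation_lt_one hϖO hunif) σ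
    (A.valuation_map_eq σ hOσ hϖσ hunif) ((A.valuation_le_one_iff _).2 h)).imp
      (A.valuation_le_one_iff x).1 (A.valuation_le_one_iff y).1

end Uniformizer

theorem Submodule.coe_span_pair_of_subring {F M : Type*} [Field F] [AddCommGroup M] [Module F M]
    (O : Subring F) (b₀ b₁ : M) :
    (span O {b₀, b₁} : Set M) = {x | ∃ c d : F, c ∈ O ∧ d ∈ O ∧ x = c • b₀ + d • b₁} := by
  ext x
  simp only [SetLike.mem_coe, mem_span_pair, Set.mem_ofPred_eq]
  constructor
  · rintro ⟨⟨c, hc⟩, ⟨d, hd⟩, rfl⟩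
    exact ⟨c, d, hc, hd, rfl⟩
  · rintro ⟨c, d, hc, hd, rfl⟩
    exact ⟨⟨c, hc⟩, ⟨d, hd⟩, rfl⟩

section Lattice

variable {F : Type*} [Field F] {O : Subring F} {σ : F →+* F} {ϖ : F}

def anisotropicForm (σ : F →+* F) (ϖ : F) (v w : Fin 2 → F) : F :=
  σ (v 0) * w 0 + ϖ * (σ (v 1) * w 1)

def dualLattice {V : Type*} (f : V → V → F) (O : Subring F) (L : Set V) : Set V :=
  {v | ∀ w ∈ L, f v w ∈ O}

theorem anisotropicForm_smul_left (c : F) (v w : Fin 2 → F) :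
    anisotropicForm σ ϖ (c • v) w = σ c * anisotropicForm σ ϖ v w := by
  simp only [anisotropicForm, Pi.smul_apply, smul_eq_mul, map_mul]
  ring

theorem mem_of_forall_anisotropicForm_eq_mul {L : Set (Fin 2 → F)} (hϖ0 : ϖ ≠ 0)
    (hϖσ : σ ϖ = ϖ) (hsup : ∀ v ∈ dualLattice (anisotropicForm σ ϖ) O L, ϖ • v ∈ L)
    {v : Fin 2 → F} (hv : ∀ w ∈ L, ∃ t ∈ O, anisotropicForm σ ϖ v w = ϖ * t) : v ∈ L := by
  have hdual : ϖ⁻¹ • v ∈ dualLattice (anisotropicForm σ ϖ) O L := by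
    intro w hw
    obtain ⟨t, ht, hvw⟩ := hv w hw
    rwa [anisotropicForm_smul_left, hvw, map_inv₀, hϖσ, inv_mul_cancel_left₀ hϖ0]
  simpa only [smul_inv_smul₀ hϖ0] using hsup _ hdual

theorem single_one_mem_of_forall_mem {L : Set (Fin 2 → F)} (hϖ0 : ϖ ≠ 0)
    (hϖσ : σ ϖ = ϖ) (hsup : ∀ v ∈ dualLattice (anisotropicForm σ ϖ) O L, ϖ • v ∈ L)
    (hLO : ∀ w ∈ L, w 1 ∈ O) : Pi.single 1 1 ∈ L :=
  mem_of_forall_anisotropicForm_eq_mul hϖ0 hϖσ hsup fun w hw =>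
    ⟨w 1, hLO w hw, by simp [anisotropicForm]⟩

theorem single_zero_mem_of_forall_mem {L : Submodule O (Fin 2 → F)} (hϖO : ϖ ∈ O)
    (hϖ0 : ϖ ≠ 0) (hϖnu : ∀ y ∈ O, ϖ * y ≠ 1) (hϖσ : σ ϖ = ϖ)
    (hunif : ∀ x : F, x ≠ 0 → ∃ (n : ℤ) (u : F), u ∈ O ∧ (∃ w ∈ O, u * w = 1) ∧ x = u * ϖ ^ n)
    (hsup : ∀ v ∈ dualLattice (anisotropicForm σ ϖ) O L, ϖ • v ∈ L)
    (hLO : ∀ w ∈ L, w 0 ∈ O ∧ w 1 ∈ O) : Pi.single 0 1 ∈ L := by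
  obtain ⟨w, hwL, hw⟩ : ∃ w ∈ L, ∀ t ∈ O, w 0 ≠ ϖ * t := by
    by_contra! h
    have he0 : Pi.single 0 1 ∈ L := mem_of_forall_anisotropicForm_eq_mul hϖ0 hϖσ hsup
      fun w hw => by simpa [anisotropicForm] using h w hw
    obtain ⟨t, ht, h1⟩ := h _ he0
    exact hϖnu t ht (by simpa using h1.symm)
  have hw0 : w 0 ≠ 0 := fun h0 => hw 0 O.zero_mem (by rw [h0, mul_zero])
  have hinv : (w 0)⁻¹ ∈ O := (O.inv_mem_or_exists_eq_mul hϖO hunif hw0).resolve_right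
    fun ⟨t, ht, h⟩ => hw t ht h
  have he1 := single_one_mem_of_forall_mem hϖ0 hϖσ hsup fun w hw => (hLO w hw).2
  have hdecomp : Pi.single 0 1 = (w 0)⁻¹ • w - ((w 0)⁻¹ * w 1) • Pi.single 1 1 := by
    funext i
    fin_cases i <;> simp [hw0]
  rw [hdecomp]
  exact L.sub_mem (L.smul_mem ⟨_, hinv⟩ hwL) (L.smul_mem ⟨_, mul_mem hinv (hLO w hwL).2⟩ he1)

theorem Submodule.coe_eq_of_subset_dualLattice (L : Submodule O (Fin 2 → F))
    (hval : ∀ x : F, x ≠ 0 → x ∈ O ∨ x⁻¹ ∈ O) (hOσ : ∀ x ∈ O, σ x ∈ O)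
    (hϖO : ϖ ∈ O) (hϖ0 : ϖ ≠ 0) (hϖnu : ∀ y ∈ O, ϖ * y ≠ 1) (hϖσ : σ ϖ = ϖ)
    (hunif : ∀ x : F, x ≠ 0 → ∃ (n : ℤ) (u : F), u ∈ O ∧ (∃ w ∈ O, u * w = 1) ∧ x = u * ϖ ^ n)
    (hsub : (L : Set (Fin 2 → F)) ⊆ dualLattice (anisotropicForm σ ϖ) O L)
    (hsup : ∀ v ∈ dualLattice (anisotropicForm σ ϖ) O L, ϖ • v ∈ L) :
    (L : Set (Fin 2 → F)) = {v | v 0 ∈ O ∧ v 1 ∈ O} := by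
  have hLO : ∀ v ∈ L, v 0 ∈ O ∧ v 1 ∈ O := fun v hv =>
    O.mem_and_mem_of_norm_add_mem hval hOσ hϖO hϖ0 hϖnu hϖσ hunif (hsub hv v hv)
  have he₀ := single_zero_mem_of_forall_mem hϖO hϖ0 hϖnu hϖσ hunif hsup hLO
  have he₁ := single_one_mem_of_forall_mem hϖ0 hϖσ hsup fun v hv => (hLO v hv).2
  refine Set.Subset.antisymm hLO fun v ⟨h₀, h₁⟩ => ?_
  have hdecomp : v = v 0 • Pi.single 0 1 + v 1 • Pi.single 1 1 := by
    funext i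
    fin_cases i <;> simp
  rw [hdecomp]
  exact L.add_mem (L.smul_mem ⟨_, h₀⟩ he₀) (L.smul_mem ⟨_, h₁⟩ he₁)

end Lattice

theorem stmt_1_general
    (F : Type) [Field F]
    (σ : F →+* F)
    (O : Subring F) (hval : ∀ x : F, x ≠ 0 → x ∈ O ∨ x⁻¹ ∈ O)
    (hOσ : ∀ x ∈ O, σ x ∈ O)
    (ϖ : F) (hϖO : ϖ ∈ O) (hϖ0 : ϖ ≠ 0) (hϖnu : ∀ y ∈ O, ϖ * y ≠ 1)
    (hϖσ : σ ϖ = ϖ)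
    (hunif : ∀ x : F, x ≠ 0 → ∃ (n : ℤ) (u : F),
      u ∈ O ∧ (∃ w ∈ O, u * w = 1) ∧ x = u * ϖ ^ n)
    (f : (Fin 2 → F) → (Fin 2 → F) → F)
    (hf : ∀ v w, f v w = σ (v 0) * w 0 + ϖ * (σ (v 1) * w 1))
    (L : Set (Fin 2 → F))
    -- `L` is an `𝔬_F`-lattice: it is the `𝔬_F`-span of an `F`-basis of `V`
    (hlat : ∃ b0 b1 : Fin 2 → F,
      (∀ x : Fin 2 → F, ∃ c d : F, x = c • b0 + d • b1) ∧
      (∀ c d : F, c • b0 + d • b1 = 0 → c = 0 ∧ d = 0) ∧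
      L = {x | ∃ c d : F, c ∈ O ∧ d ∈ O ∧ x = c • b0 + d • b1})
    -- `L^# ⊇ L ⊇ ϖ L^#`
    (hsub : L ⊆ {v | ∀ w ∈ L, f v w ∈ O})
    (hsup : ∀ v ∈ {v : Fin 2 → F | ∀ w ∈ L, f v w ∈ O}, ϖ • v ∈ L) :
    L = {v : Fin 2 → F | v 0 ∈ O ∧ v 1 ∈ O} := by
  obtain ⟨b₀, b₁, -, -, rfl⟩ := hlat
  obtain rfl : f = anisotropicForm σ ϖ := funext₂ hf
  rw [← Submodule.coe_span_pair_of_subring] at hsub hsup ⊢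
  exact (Submodule.span O {b₀, b₁}).coe_eq_of_subset_dualLattice hval hOσ hϖO hϖ0 hϖnu hϖσ
    hunif hsub hsup

/-- In the 2-dimensional anisotropic hermitian space
`(V, f₀)`, `f₀(x,y) = x̄₁y₁ + ϖ x̄₂y₂`, over the unramified quadratic extension
`F/F₀`, the lattice `L = 𝔬_F e₁ ⊕ 𝔬_F e₂` is the unique `𝔬_F`-lattice with
`L^# ⊇ L ⊇ ϖ L^#`, where `L^# = {v | f₀(v, L) ⊆ 𝔬_F}`. -/
theorem stmt_1
    (F : Type) [Field F]
    (σ : F →+* F) (hσ2 : ∀ x, σ (σ x) = x) (hσne : σ ≠ RingHom.id F)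
    (O : Subring F) (hval : ∀ x : F, x ≠ 0 → x ∈ O ∨ x⁻¹ ∈ O)
    (hOσ : ∀ x ∈ O, σ x ∈ O)
    (hodd : ∃ t ∈ O, 2 * t = 1)
    (ϖ : F) (hϖO : ϖ ∈ O) (hϖ0 : ϖ ≠ 0) (hϖnu : ∀ y ∈ O, ϖ * y ≠ 1)
    (hϖσ : σ ϖ = ϖ)
    (hunif : ∀ x : F, x ≠ 0 → ∃ (n : ℤ) (u : F),
      u ∈ O ∧ (∃ w ∈ O, u * w = 1) ∧ x = u * ϖ ^ n)
    (f : (Fin 2 → F) → (Fin 2 → F) → F)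
    (hf : ∀ v w, f v w = σ (v 0) * w 0 + ϖ * (σ (v 1) * w 1))
    (L : Set (Fin 2 → F))
    -- `L` is an `𝔬_F`-lattice: it is the `𝔬_F`-span of an `F`-basis of `V`
    (hlat : ∃ b0 b1 : Fin 2 → F,
      (∀ x : Fin 2 → F, ∃ c d : F, x = c • b0 + d • b1) ∧
      (∀ c d : F, c • b0 + d • b1 = 0 → c = 0 ∧ d = 0) ∧
      L = {x | ∃ c d : F, c ∈ O ∧ d ∈ O ∧ x = c • b0 + d • b1})
    -- `L^# ⊇ L ⊇ ϖ L^#`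
    (hsub : L ⊆ {v | ∀ w ∈ L, f v w ∈ O})
    (hsup : ∀ v ∈ {v : Fin 2 → F | ∀ w ∈ L, f v w ∈ O}, ϖ • v ∈ L) :
    L = {v : Fin 2 → F | v 0 ∈ O ∧ v 1 ∈ O} :=
  stmt_1_general F σ O hval hOσ ϖ hϖO hϖ0 hϖnu hϖσ hunif f hf L hlat hsub hsup
end

section
/- Let $G$ be a group, $J$ a subgroup, and $x \in G$ an element with $x^2$ central in $G$ such that conjugation by $x$ preserves $J$. Suppose $J$ is a pro-$p$ group for an odd prime $p$ (or more simply: a finite $p$-group for odd $p$), and let $G^x$ denote the fixed points of conjugation by $x$ in $G$. Then for every $g \in G^x$, $JgJ \cap G^x = (J \cap G^x)\, g\, (J \cap G^x)$. -/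
/-!
Write `τ` for conjugation by `x`, an involution since `x²` is central. If `h = j g j'` is
`τ`-fixed, then `b = τ(j') j'⁻¹ ∈ J` satisfies `τ(b) = b⁻¹`, and comparing `h` with `τ(h)`
shows that `g b g⁻¹ = τ(j)⁻¹ j` lies in `J`. Since `b` has odd order it has a square root `c`
in the cyclic group it generates, so `τ(c) = c⁻¹` and `c j'` is a `τ`-fixed element of `J`.
Then `h (c j')⁻¹ g⁻¹ = j (g c g⁻¹)⁻¹` lies in `J` and is `τ`-fixed, which gives the required
factorisation.
-/

section

variable {G : Type*} [Group G]

theorem exists_pow_sq_eq_of_odd_orderOf {b : G} (hb : Odd (orderOf b)) :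
    ∃ m : ℕ, (b ^ m) ^ 2 = b := by
  obtain ⟨k, hk⟩ := hb
  refine ⟨k + 1, ?_⟩
  rw [← pow_mul, show (k + 1) * 2 = orderOf b + 1 by omega, pow_succ, pow_orderOf_eq_one,
    one_mul]

theorem IsPGroup.odd_orderOf_of_mem {p : ℕ} (hp : Odd p) {J : Subgroup G} (hJ : IsPGroup p J)
    {j : G} (hj : j ∈ J) : Odd (orderOf j) := by
  obtain ⟨k, hk⟩ := hJ ⟨j, hj⟩
  exact (hp.pow (n := k)).of_dvd_nat
    (orderOf_dvd_of_pow_eq_one (by simpa using congrArg Subtype.val hk))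

theorem MulAut.conj_involutive_of_commute_sq {x : G} (hx2 : ∀ g : G, x ^ 2 * g = g * x ^ 2) :
    Function.Involutive (MulAut.conj x) := by
  intro g
  calc x * (x * g * x⁻¹) * x⁻¹ = x ^ 2 * g * (x ^ 2)⁻¹ := by rw [pow_two]; group
    _ = g := by rw [hx2 g, mul_inv_cancel_right]

variable {τ : G →* G} (hτ : Function.Involutive τ) {J : Subgroup G}
  (hJ : ∀ j ∈ J, τ j ∈ J) (hodd : ∀ j ∈ J, Odd (orderOf j))
include hτ hJ hodd

theorem exists_fixed_right_factor_of_fixed {g h j j' : G} (hg : τ g = g) (hh : τ h = h)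
    (hj : j ∈ J) (hj' : j' ∈ J) (hjgj : h = j * g * j') :
    ∃ k' ∈ J, τ k' = k' ∧ h * k'⁻¹ * g⁻¹ ∈ J := by
  set b := τ j' * j'⁻¹ with hb
  have hbJ : b ∈ J := mul_mem (hJ j' hj') (inv_mem hj')
  have hτh : τ j * g * τ j' = j * g * j' := by
    rwa [hjgj, map_mul, map_mul, hg] at hh
  have hconj : g * b * g⁻¹ = (τ j)⁻¹ * j :=
    calc g * b * g⁻¹ = (τ j)⁻¹ * (τ j * g * τ j') * j'⁻¹ * g⁻¹ := by rw [hb]; group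
      _ = (τ j)⁻¹ * j := by rw [hτh]; group
  obtain ⟨m, hm⟩ := exists_pow_sq_eq_of_odd_orderOf (hodd b hbJ)
  have hτc : τ (b ^ m) = (b ^ m)⁻¹ := by
    rw [map_pow, hb, map_mul, map_inv, hτ j', ← inv_pow, mul_inv_rev, inv_inv]
  refine ⟨b ^ m * j', mul_mem (pow_mem hbJ m) hj', ?_, ?_⟩
  · calc τ (b ^ m * j') = (b ^ m)⁻¹ * ((b ^ m) ^ 2 * j') := by
          rw [map_mul, hτc, hm, hb, inv_mul_cancel_right]
      _ = b ^ m * j' := by group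
  · have hfac : h * (b ^ m * j')⁻¹ * g⁻¹ = j * (((τ j)⁻¹ * j) ^ m)⁻¹ := by
      rw [hjgj, ← hconj, conj_pow]; group
    rw [hfac]
    exact mul_mem hj (inv_mem (pow_mem (mul_mem (inv_mem (hJ j hj)) hj) m))

theorem doubleCoset_inter_fixedPoints {g : G} (hg : τ g = g) :
    {h : G | ∃ j ∈ J, ∃ j' ∈ J, h = j * g * j'} ∩ {h : G | τ h = h} =
      {h : G | ∃ j ∈ J, (τ j = j ∧ ∃ j' ∈ J, τ j' = j' ∧ h = j * g * j')} := by
  ext h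
  constructor
  · rintro ⟨⟨j, hj, j', hj', hjgj⟩, hh⟩
    obtain ⟨k', hk'J, hk', hk⟩ :=
      exists_fixed_right_factor_of_fixed hτ hJ hodd hg hh hj hj' hjgj
    refine ⟨_, hk, ?_, k', hk'J, hk', by group⟩
    rw [map_mul, map_mul, map_inv, map_inv, hh, hk', hg]
  · rintro ⟨j, hj, hjτ, j', hj', hj'τ, rfl⟩
    exact ⟨⟨j, hj, j', hj', rfl⟩, show τ (j * g * j') = _ by rw [map_mul, map_mul, hjτ, hg, hj'τ]⟩

end

theorem stmt_10_general
    (G : Type) [Group G] (J : Subgroup G) (p : ℕ) [Fact p.Prime] (hp : p ≠ 2)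
    (hJp : IsPGroup p J)
    (x : G) (hx2 : ∀ g : G, x ^ 2 * g = g * x ^ 2)
    (hJx : ∀ j ∈ J, x * j * x⁻¹ ∈ J)
    (g : G) (hg : x * g * x⁻¹ = g) :
    {h : G | ∃ j ∈ J, ∃ j' ∈ J, h = j * g * j'} ∩ {h : G | x * h * x⁻¹ = h} =
      {h : G | ∃ j ∈ J, (x * j * x⁻¹ = j ∧ ∃ j' ∈ J, x * j' * x⁻¹ = j' ∧ h = j * g * j')} :=
  doubleCoset_inter_fixedPoints (τ := (MulAut.conj x).toMonoidHom)
    (MulAut.conj_involutive_of_commute_sq hx2) hJx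
    (fun _ => hJp.odd_orderOf_of_mem ((Fact.out : p.Prime).odd_of_ne_two hp)) hg

/-- Stevens' Lemma 2.1: Let `G` be a group, `J` a subgroup which is a
finite `p`-group for an odd prime `p`, and `x ∈ G` with `x²` central such that
conjugation by `x` preserves `J`.  Writing `G^x` for the fixed points of conjugation
by `x`, for every `g ∈ G^x` one has `JgJ ∩ G^x = (J ∩ G^x) g (J ∩ G^x)`. -/
theorem stmt_10
    (G : Type) [Group G] (J : Subgroup G) (p : ℕ) [Fact p.Prime] (hp : p ≠ 2)
    [Finite J] (hJp : IsPGroup p J)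
    (x : G) (hx2 : ∀ g : G, x ^ 2 * g = g * x ^ 2)
    (hJx : ∀ j ∈ J, x * j * x⁻¹ ∈ J)
    (g : G) (hg : x * g * x⁻¹ = g) :
    {h : G | ∃ j ∈ J, ∃ j' ∈ J, h = j * g * j'} ∩ {h : G | x * h * x⁻¹ = h} =
      {h : G | ∃ j ∈ J, (x * j * x⁻¹ = j ∧ ∃ j' ∈ J, x * j' * x⁻¹ = j' ∧ h = j * g * j')} :=
  stmt_10_general G J p hp hJp x hx2 hJx g hg
end

section
/- Let $\Lambda$ be a strict $\mathfrak{o}_F$-lattice sequence of period $e$ in an $F$-vector space $V$ of dimension $N$, and let $n$ be an integer coprime to $e$. For $\beta \in \mathfrak{a}_{-n}(\Lambda)$ set $y_\beta = \varpi^{n}\beta^{e}$ (here $(e,n)=1$). Write the characteristic polynomial of $y_\beta$ modulo $\mathfrak{p}_F$ as $\phi_\beta(X) = \prod_{i \in \mathbf{Z}/e\mathbf{Z}} \phi_i(X)$, where $\phi_i$ is the characteristic polynomial of the map induced by $y_\beta$ on $\overline{\Lambda}(i) = \Lambda(i)/\Lambda(i+1)$. If $j$ is chosen with $n_j = \dim_{k_F}\overline{\Lambda}(j)$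 minimal, then $\phi_\beta(X) = \phi_j(X)^e \cdot X^{m}$ with $m = N - e\, n_j$. -/
/-!
Since `n` is a unit modulo `e`, every piece `W i` is reached from `W j` by a power of `B`:
`f = B ^ t : W j → W i` and `g = B ^ (e - t) : W i → W j`. On `W j` the map `B ^ e` is `g ∘ f`, on
`W i` it is `f ∘ g`, and `X ^ dim W i · χ(g ∘ f) = X ^ dim W j · χ(f ∘ g)`. As `W j` has minimal
dimension, every `φ_i` is `φ_j · X ^ (dim W i - dim W j)`, and `φ_β` is the product of the `e`
polynomials `φ_i` over the direct sum.
-/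

open Polynomial Module

namespace Matrix

variable {R ι : Type*} [CommRing R] [Fintype ι] [DecidableEq ι] {m : ι → Type*}
  [∀ i, Fintype (m i)] [∀ i, DecidableEq (m i)]

theorem det_blockDiagonal' (d : ∀ i, Matrix (m i) (m i) R) :
    (blockDiagonal' d).det = ∏ i, (d i).det := by
  let : LinearOrder ι := LinearOrder.lift' (Fintype.equivFin ι) (Fintype.equivFin ι).injective
  rw [(blockTriangular_blockDiagonal' d).det_fintype]
  refine Finset.prod_congr rfl fun i _ => ?_
  rw [← det_submatrix_equiv_self (Equiv.sigmaSubtype i).symm]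
  congr 1
  ext x y
  exact blockDiagonal'_apply_eq d i x y

theorem charpoly_blockDiagonal' (d : ∀ i, Matrix (m i) (m i) R) :
    (blockDiagonal' d).charpoly = ∏ i, (d i).charpoly := by
  have : charmatrix (blockDiagonal' d) = blockDiagonal' fun i => charmatrix (d i) := by
    rw [charmatrix, scalar_apply, RingHom.mapMatrix_apply, blockDiagonal'_map _ _ (map_zero C),
      ← blockDiagonal'_diagonal fun i (_ : m i) => (X : R[X]), ← blockDiagonal'_sub]
    rfl
  rw [charpoly, this, det_blockDiagonal']
  rfl

end Matrix

namespace DirectSum.IsInternal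

variable {k V ι : Type*} [Field k] [AddCommGroup V] [Module k V] [FiniteDimensional k V]
  [Fintype ι] [DecidableEq ι] {N : ι → Submodule k V}

theorem charpoly_eq_prod_charpoly_restrict (h : IsInternal N) {f : Module.End k V}
    (hf : ∀ i, ∀ x ∈ N i, f x ∈ N i) :
    f.charpoly = ∏ i, (f.restrict (hf i)).charpoly := by
  let b i := finBasis k (N i)
  rw [← LinearMap.charpoly_toMatrix f (h.collectedBasis b),
    LinearMap.toMatrix_directSum_collectedBasis_eq_blockDiagonal' h h b b hf,
    Matrix.charpoly_blockDiagonal']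
  exact Finset.prod_congr rfl fun i _ => LinearMap.charpoly_toMatrix _ (b i)

theorem sum_finrank_eq (h : IsInternal N) : ∑ i, finrank k (N i) = finrank k V := by
  rw [finrank_eq_card_basis (h.collectedBasis fun i => finBasis k (N i))]
  simp

end DirectSum.IsInternal

theorem LinearMap.X_pow_mul_charpoly_comp_comm {R M M' : Type*} [CommRing R] [Nontrivial R]
    [AddCommGroup M] [Module R M] [Module.Free R M] [Module.Finite R M]
    [AddCommGroup M'] [Module R M'] [Module.Free R M'] [Module.Finite R M']
    (f : M →ₗ[R] M') (g : M' →ₗ[R] M) :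
    X ^ finrank R M' * (g ∘ₗ f).charpoly = X ^ finrank R M * (f ∘ₗ g).charpoly := by
  let bM := finBasis R M
  let bM' := finBasis R M'
  rw [← charpoly_toMatrix (g ∘ₗ f) bM, ← charpoly_toMatrix (f ∘ₗ g) bM', toMatrix_comp bM bM' bM,
    toMatrix_comp bM' bM bM']
  simpa using Matrix.charpoly_mul_comm' (toMatrix bM' bM g) (toMatrix bM bM' f)

theorem ZMod.exists_lt_nsmul_eq_of_coprime {e n : ℕ} [NeZero e] (h : Nat.Coprime e n)
    (a : ZMod e) : ∃ t < e, t • (n : ZMod e) = a :=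
  ⟨(a * (n : ZMod e)⁻¹).val, ZMod.val_lt _, by
    rw [nsmul_eq_mul, ZMod.natCast_zmod_val, mul_assoc, mul_comm _ (n : ZMod e),
      ZMod.coe_mul_inv_eq_one n h.symm, mul_one]⟩

namespace Module.End

variable {k V : Type*} [Field k] [AddCommGroup V] [Module k V]

theorem X_pow_mul_charpoly_restrict_comm [FiniteDimensional k V] {f g φ : End k V}
    {P Q : Submodule k V} (hf : ∀ x ∈ P, f x ∈ Q) (hg : ∀ x ∈ Q, g x ∈ P) (hgf : g * f = φ)
    (hfg : f * g = φ) (hP : ∀ x ∈ P, φ x ∈ P) (hQ : ∀ x ∈ Q, φ x ∈ Q) :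
    X ^ finrank k Q * (φ.restrict hP).charpoly = X ^ finrank k P * (φ.restrict hQ).charpoly := by
  have hP' : φ.restrict hP = g.restrict hg ∘ₗ f.restrict hf := by
    ext x
    simp [← hgf]
  have hQ' : φ.restrict hQ = f.restrict hf ∘ₗ g.restrict hg := by
    ext x
    simp [← hfg]
  rw [hP', hQ']
  exact LinearMap.X_pow_mul_charpoly_comp_comm _ _

theorem pow_apply_mem_sub_nsmul {ι : Type*} [AddCommGroup ι] {W : ι → Submodule k V}
    {B : End k V} {s : ι} (hB : ∀ i, ∀ x ∈ W i, B x ∈ W (i - s)) (t : ℕ) (i : ι) :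
    ∀ x ∈ W i, (B ^ t) x ∈ W (i - t • s) := by
  induction t generalizing i with
  | zero => simp
  | succ t ih =>
    intro x hx
    rw [pow_succ', mul_apply, succ_nsmul, sub_add_eq_sub_sub]
    exact hB _ _ (ih i x hx)

variable {e : ℕ} {W : ZMod e → Submodule k V} {B : End k V}

theorem pow_card_apply_mem {s : ZMod e} (hB : ∀ i, ∀ x ∈ W i, B x ∈ W (i - s)) (i : ZMod e) :
    ∀ x ∈ W i, (B ^ e) x ∈ W i := by
  simpa [nsmul_eq_mul] using pow_apply_mem_sub_nsmul hB e i

variable [FiniteDimensional k V]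

theorem X_pow_mul_charpoly_restrict_pow_card_comm {s : ZMod e}
    (hB : ∀ i, ∀ x ∈ W i, B x ∈ W (i - s)) {i j : ZMod e} {t u : ℕ} (htu : t + u = e)
    (hij : i = j - t • s) :
    X ^ finrank k (W i) * ((B ^ e).restrict (pow_card_apply_mem hB j)).charpoly =
      X ^ finrank k (W j) * ((B ^ e).restrict (pow_card_apply_mem hB i)).charpoly := by
  have hji : j = i - u • s := by
    rw [hij, sub_sub, ← add_nsmul, htu]
    simp [nsmul_eq_mul]
  refine X_pow_mul_charpoly_restrict_comm (f := B ^ t) (g := B ^ u) ?_ ?_ ?_ ?_ _ _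
  · simpa [hij] using pow_apply_mem_sub_nsmul hB t j
  · simpa [hji] using pow_apply_mem_sub_nsmul hB u i
  · rw [← pow_add, add_comm, htu]
  · rw [← pow_add, htu]

theorem charpoly_restrict_pow_card_eq_mul_X_pow [NeZero e] {n : ℕ} (hcop : Nat.Coprime e n)
    (hB : ∀ i, ∀ x ∈ W i, B x ∈ W (i - (n : ZMod e))) {i j : ZMod e}
    (hle : finrank k (W j) ≤ finrank k (W i)) :
    ((B ^ e).restrict (pow_card_apply_mem hB i)).charpoly =
      ((B ^ e).restrict (pow_card_apply_mem hB j)).charpoly *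
        X ^ (finrank k (W i) - finrank k (W j)) := by
  obtain ⟨t, ht, hts⟩ := ZMod.exists_lt_nsmul_eq_of_coprime hcop (j - i)
  have hcomm := X_pow_mul_charpoly_restrict_pow_card_comm hB (Nat.add_sub_cancel' ht.le)
    (by rw [hts, sub_sub_cancel])
  refine mul_left_cancel₀ (pow_ne_zero (finrank k (W j)) X_ne_zero) ?_
  rw [← hcomm, mul_left_comm, ← pow_add, Nat.add_sub_cancel' hle, mul_comm]

end Module.End

/-- `W i` stands for `Λ(i)/Λ(i+1)` over `k = k_F`, `B` for the map induced by `β`, which lowers the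
degree by `n`, and `B ^ e` for the map induced by `y_β`. -/
theorem stmt_12
    (k : Type) [Field k]
    (V : Type) [AddCommGroup V] [Module k V] [FiniteDimensional k V]
    (e : ℕ) (he : 0 < e) (n : ℕ) (hcop : Nat.Coprime e n)
    (W : ZMod e → Submodule k V)
    (hsup : iSup W = ⊤)
    (hind : iSupIndep W)
    (B : V →ₗ[k] V)
    (hB : ∀ i : ZMod e, ∀ x ∈ W i, B x ∈ W (i - (n : ZMod e)))
    (j : ZMod e)
    (hmin : ∀ i : ZMod e, Module.finrank k (W j) ≤ Module.finrank k (W i))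
    (hstab : ∀ x ∈ W j, (B ^ e) x ∈ W j) :
    (B ^ e).charpoly =
      ((B ^ e).restrict hstab).charpoly ^ e *
        X ^ (Module.finrank k V - e * Module.finrank k (W j)) := by
  have : NeZero e := ⟨he.ne'⟩
  have hW : DirectSum.IsInternal W :=
    DirectSum.isInternal_submodule_of_iSupIndep_of_iSup_eq_top hind hsup
  have hexp : ∑ i, (finrank k (W i) - finrank k (W j)) = finrank k V - e * finrank k (W j) := by
    rw [Finset.sum_tsub_distrib _ fun i _ => hmin i, hW.sum_finrank_eq, Finset.sum_const,
      Finset.card_univ, ZMod.card, smul_eq_mul]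
  rw [hW.charpoly_eq_prod_charpoly_restrict (Module.End.pow_card_apply_mem hB),
    Finset.prod_congr rfl fun i _ =>
      Module.End.charpoly_restrict_pow_card_eq_mul_X_pow hcop hB (hmin i),
    Finset.prod_mul_distrib, Finset.prod_const, Finset.card_univ, ZMod.card,
    Finset.prod_pow_eq_pow_sum, hexp]
end
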